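/- arXiv:1510.04424 — 2 statements merged into one kernel-verified Lean document; each statement's English description precedes it below -/
import Mathlib

section
/- Let μ > 0, λ > 0, let q ≥ 0 be an integer, and let N ≥ 1. Let f₁,…,f_N : T → ℝ be measurable functions satisfying |f_k(x,ξ)| ≤ C M^q x^q / q! on T for constants C > 0 and M > 0, and let a₁,…,a_N : [0,1] → ℝ satisfy |a_k(y)| ≤ A for all y ∈ [0,1]. Assume M ≥ N·A/μ. Then for every (x,ξ) ∈ T, setting s^F = (x − ξ)/(μ + λ), one has | ∫₀^{s^F} Σ_{k=1}^{N} a_k(x − μs) f_k(x − μs, ξ + λs) ds | ≤ C M^{q+1} x^{q+1} / (q+1)!. -/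
/-! Along the characteristic through `(x, ξ)` the point `(x - μ s, ξ + λ s)` stays in `T` for
`s ∈ [0, s^F]`, so each summand is bounded by `A · C M^q (x - μ s)^q / q!`. Integrating
`(x - μ s)^q` over `[0, s^F]` gives at most `x^(q+1) / (μ (q+1))`, and the factor `N A / μ`
produced this way is absorbed by `M`. -/

open Set intervalIntegral

theorem characteristic_mem_triangle {μ lam x ξ s : ℝ} (hμ : 0 ≤ μ) (hlam : 0 ≤ lam)
    (hμlam : 0 < μ + lam) (hξ : 0 ≤ ξ) (hx : x ≤ 1)
    (hs : s ∈ Icc 0 ((x - ξ) / (μ + lam))) :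
    0 ≤ ξ + lam * s ∧ ξ + lam * s ≤ x - μ * s ∧ x - μ * s ≤ 1 := by
  obtain ⟨hs₀, hsF⟩ := hs
  have hs_sum : (μ + lam) * s ≤ x - ξ := (le_div_iff₀' hμlam).mp hsF
  refine ⟨by positivity, by linarith, ?_⟩
  nlinarith

theorem abs_sum_mul_le_card_mul {ι : Type*} [Fintype ι] {a f : ι → ℝ} {A B : ℝ}
    (ha : ∀ i, |a i| ≤ A) (hf : ∀ i, |f i| ≤ B) :
    |∑ i, a i * f i| ≤ Fintype.card ι * (A * B) := by
  calc |∑ i, a i * f i| ≤ ∑ i, |a i * f i| := Finset.abs_sum_le_sum_abs _ _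
    _ ≤ ∑ _i : ι, A * B := by
        gcongr with i
        rw [abs_mul]
        exact mul_le_mul (ha i) (hf i) (abs_nonneg _) ((abs_nonneg _).trans (ha i))
    _ = Fintype.card ι * (A * B) := by simp

theorem integral_sub_mul_pow_le {μ x b : ℝ} (hμ : 0 < μ) (hb : 0 ≤ x - μ * b) (q : ℕ) :
    ∫ s in (0 : ℝ)..b, (x - μ * s) ^ q ≤ x ^ (q + 1) / ((q + 1) * μ) := by
  rw [integral_comp_sub_mul (fun y => y ^ q) hμ.ne', integral_pow, mul_zero, sub_zero,
    smul_eq_mul, ← div_eq_inv_mul, div_div]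
  exact div_le_div_of_nonneg_right (sub_le_self _ (pow_nonneg hb _)) (by positivity)

theorem successive_approximation_recursive_bound_general
    (μ lam : ℝ) (hμ : 0 < μ) (hlam : 0 < lam)
    (q : ℕ) (N : ℕ)
    (f : Fin N → ℝ → ℝ → ℝ) (a : Fin N → ℝ → ℝ)
    (C M A : ℝ) (hC : 0 < C) (hM : 0 < M)
    (hfb : ∀ k, ∀ x ξ : ℝ, 0 ≤ ξ → ξ ≤ x → x ≤ 1 →
        |f k x ξ| ≤ C * M ^ q * x ^ q / (Nat.factorial q : ℝ))
    (hab : ∀ k, ∀ y ∈ Set.Icc (0:ℝ) 1, |a k y| ≤ A)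
    (hMA : (N : ℝ) * A / μ ≤ M)
    (x ξ : ℝ) (hξ : 0 ≤ ξ) (hxξ : ξ ≤ x) (hx : x ≤ 1) :
    |∫ s in (0:ℝ)..((x - ξ) / (μ + lam)),
        ∑ k, a k (x - μ * s) * f k (x - μ * s) (ξ + lam * s)| ≤
      C * M ^ (q + 1) * x ^ (q + 1) / (Nat.factorial (q + 1) : ℝ) := by
  set sF := (x - ξ) / (μ + lam)
  have hsF : 0 ≤ sF := div_nonneg (sub_nonneg.2 hxξ) (by positivity)
  have hx₀ : 0 ≤ x := hξ.trans hxξ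
  have hmem s (hs : s ∈ Icc 0 sF) :=
    characteristic_mem_triangle hμ.le hlam.le (by positivity) hξ hx hs
  have hNA : 0 ≤ (N : ℝ) * A := by
    rcases N.eq_zero_or_pos with rfl | hN
    · simp
    · exact mul_nonneg N.cast_nonneg ((abs_nonneg _).trans (hab ⟨0, hN⟩ 0 ⟨le_rfl, zero_le_one⟩))
  have hpointwise : ∀ s ∈ Icc 0 sF, ‖∑ k, a k (x - μ * s) * f k (x - μ * s) (ξ + lam * s)‖ ≤
      N * A * C * M ^ q / q.factorial * (x - μ * s) ^ q := by
    intro s hs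
    obtain ⟨h₀, h₁, h₂⟩ := hmem s hs
    rw [Real.norm_eq_abs]
    convert abs_sum_mul_le_card_mul (fun k => hab k _ ⟨h₀.trans h₁, h₂⟩)
      (fun k => hfb k _ _ h₀ h₁ h₂) using 1
    simp only [Fintype.card_fin]
    ring
  obtain ⟨hend₀, hend₁, -⟩ := hmem sF ⟨hsF, le_rfl⟩
  calc _ ≤ ∫ s in (0:ℝ)..sF, N * A * C * M ^ q / q.factorial * (x - μ * s) ^ q :=
        norm_integral_le_of_norm_le hsF
          (Filter.Eventually.of_forall fun s hs => hpointwise s (Ioc_subset_Icc_self hs))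
          (Continuous.intervalIntegrable (by fun_prop) _ _)
    _ = N * A * C * M ^ q / q.factorial * ∫ s in (0:ℝ)..sF, (x - μ * s) ^ q :=
        integral_const_mul _ _
    _ ≤ N * A * C * M ^ q / q.factorial * (x ^ (q + 1) / ((q + 1) * μ)) := by
        gcongr
        exact integral_sub_mul_pow_le hμ (hend₀.trans hend₁) q
    _ = N * A / μ * (C * M ^ q * x ^ (q + 1) / (q + 1).factorial) := by
        rw [Nat.factorial_succ]
        push_cast
        field_simp
    _ ≤ M * (C * M ^ q * x ^ (q + 1) / (q + 1).factorial) := by gcongr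
    _ = _ := by ring

theorem successive_approximation_recursive_bound
    (μ lam : ℝ) (hμ : 0 < μ) (hlam : 0 < lam)
    (q : ℕ) (N : ℕ) (hN : 1 ≤ N)
    (f : Fin N → ℝ → ℝ → ℝ) (a : Fin N → ℝ → ℝ)
    (C M A : ℝ) (hC : 0 < C) (hM : 0 < M)
    (hfmeas : ∀ k, Measurable (fun p : ℝ × ℝ => f k p.1 p.2))
    (hfb : ∀ k, ∀ x ξ : ℝ, 0 ≤ ξ → ξ ≤ x → x ≤ 1 →
        |f k x ξ| ≤ C * M ^ q * x ^ q / (Nat.factorial q : ℝ))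
    (hameas : ∀ k, Measurable (a k))
    (hab : ∀ k, ∀ y ∈ Set.Icc (0:ℝ) 1, |a k y| ≤ A)
    (hMA : (N : ℝ) * A / μ ≤ M)
    (x ξ : ℝ) (hξ : 0 ≤ ξ) (hxξ : ξ ≤ x) (hx : x ≤ 1) :
    |∫ s in (0:ℝ)..((x - ξ) / (μ + lam)),
        ∑ k, a k (x - μ * s) * f k (x - μ * s) (ξ + lam * s)| ≤
      C * M ^ (q + 1) * x ^ (q + 1) / (Nat.factorial (q + 1) : ℝ) :=
  successive_approximation_recursive_bound_general μ lam hμ hlam q N f a C M A hC hM hfb hab hMA x ξ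
    hξ hxξ hx
end

section
/- Let K : T → ℝ^{m×n} and L : T → ℝ^{m×m} be bounded measurable matrix functions and let Σ⁺⁻ ∈ ℝ^{n×m}. Then there exists a unique bounded measurable C⁻ : T → ℝ^{n×m} satisfying the Volterra integral equation of the second kind C⁻(x,ξ) = Σ⁺⁻L(x,ξ) + ∫_ξ^x C⁻(x,s)L(s,ξ) ds for all (x,ξ) ∈ T; moreover, the function C⁺ : T → ℝ^{n×n} defined by C⁺(x,ξ) = Σ⁺⁻K(x,ξ) + ∫_ξ^x C⁻(x,s)K(s,ξ) ds is then bounded as well. -/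
/-!
The equation is solved by its Neumann series. Each application of the Volterra operator
`u ↦ ∫_ξ^x u(x,s) L(s,ξ) ds` integrates the majorant `(x - s)^N / N!` once more, so the `N`-th
iterate is bounded on the triangle by `A (m B)^N (x - ξ)^N / N!`. The series therefore converges
with an exponential bound, and dominated convergence carries the equation over to its sum. The same
estimate, applied to the difference of two bounded solutions (a fixed point of the operator),
forces that difference to vanish; `C⁺` is then bounded term by term.
-/

open MeasureTheory Set Filter
open scoped Nat

theorem measurable_intervalIntegral_of_uncurry {α : Type*} [MeasurableSpace α] {f : α → ℝ → ℝ}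
    (hf : Measurable (Function.uncurry f)) {a b : α → ℝ} (ha : Measurable a) (hb : Measurable b) :
    Measurable fun p => ∫ s in a p..b p, f p s := by
  have hIoc : ∀ {a b : α → ℝ}, Measurable a → Measurable b →
      Measurable fun p => ∫ s in Ioc (a p) (b p), f p s := by
    intro a b ha hb
    have hS : MeasurableSet {q : α × ℝ | q.2 ∈ Ioc (a q.1) (b q.1)} :=
      (measurableSet_lt (ha.comp measurable_fst) measurable_snd).inter
        (measurableSet_le measurable_snd (hb.comp measurable_fst))
    convert ((hf.indicator hS).stronglyMeasurable.integral_prod_right'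
      (ν := volume)).measurable using 2 with p
    rw [← integral_indicator measurableSet_Ioc]
    rfl
  exact (hIoc ha hb).sub (hIoc hb ha)

theorem integral_sub_pow_div_factorial (N : ℕ) (a b : ℝ) :
    ∫ s in a..b, (b - s) ^ N / N ! = (b - a) ^ (N + 1) / (N + 1)! := by
  rw [intervalIntegral.integral_div, intervalIntegral.integral_comp_sub_left (fun t => t ^ N),
    integral_pow, sub_self, Nat.factorial_succ]
  push_cast
  field_simp
  ring

theorem abs_sum_mul_le {κ : Type*} [Fintype κ] {a b : κ → ℝ} {A B : ℝ}
    (ha : ∀ k, |a k| ≤ A) (hb : ∀ k, |b k| ≤ B) :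
    |∑ k, a k * b k| ≤ Fintype.card κ * (A * B) := by
  calc |∑ k, a k * b k| ≤ ∑ k, |a k| * |b k| := by
        simpa only [abs_mul] using Finset.abs_sum_le_sum_abs (fun k => a k * b k) Finset.univ
    _ ≤ ∑ _k : κ, A * B := Finset.sum_le_sum fun k _ =>
        mul_le_mul (ha k) (hb k) (abs_nonneg _) ((abs_nonneg _).trans (ha k))
    _ = Fintype.card κ * (A * B) := by simp

def triangle : Set (ℝ × ℝ) := {p | 0 ≤ p.2 ∧ p.2 ≤ p.1 ∧ p.1 ≤ 1}

section Triangle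

variable {x ξ s : ℝ}

theorem sub_le_one_of_mem_triangle (h : (x, ξ) ∈ triangle) : x - ξ ≤ 1 := by
  obtain ⟨h0, -, h1⟩ := h
  linarith

theorem mem_triangle_left (h : (x, ξ) ∈ triangle) (hs : s ∈ Icc ξ x) : (x, s) ∈ triangle :=
  ⟨h.1.trans hs.1, hs.2, h.2.2⟩

theorem mem_triangle_right (h : (x, ξ) ∈ triangle) (hs : s ∈ Icc ξ x) : (s, ξ) ∈ triangle :=
  ⟨h.1, hs.1, hs.2.trans h.2.2⟩

end Triangle

section Volterra

variable {ι κ ρ : Type*} [Fintype κ]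

def BoundedOnTriangle (u : ℝ → ℝ → ι → κ → ℝ) (A : ℝ) : Prop :=
  ∀ x ξ, (x, ξ) ∈ triangle → ∀ i j, |u x ξ i j| ≤ A

def KernelMeasurable (u : ℝ → ℝ → ι → κ → ℝ) : Prop :=
  ∀ i j, Measurable fun p : ℝ × ℝ => u p.1 p.2 i j

noncomputable def volterra (L : ℝ → ℝ → κ → ρ → ℝ) (u : ℝ → ℝ → ι → κ → ℝ) : ℝ → ℝ → ι → ρ → ℝ :=
  fun x ξ i j => ∫ s in ξ..x, ∑ k, u x s i k * L s ξ k j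

variable {L : ℝ → ℝ → κ → ρ → ℝ} {u v : ℝ → ℝ → ι → κ → ℝ} {A B : ℝ}

theorem KernelMeasurable.volterra (hu : KernelMeasurable u) (hL : KernelMeasurable L) :
    KernelMeasurable (volterra L u) := by
  intro i j
  refine measurable_intervalIntegral_of_uncurry (f := fun p s => ∑ k, u p.1 s i k * L s p.2 k j)
    ?_ measurable_snd measurable_fst
  refine Finset.measurable_sum _ fun k _ => Measurable.mul ?_ ?_
  · exact (hu i k).comp ((measurable_fst.comp measurable_fst).prodMk measurable_snd)
  · exact (hL k j).comp (measurable_snd.prodMk (measurable_snd.comp measurable_fst))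

theorem KernelMeasurable.measurable_volterra_integrand (hu : KernelMeasurable u)
    (hL : KernelMeasurable L) (x ξ : ℝ) (i : ι) (j : ρ) :
    Measurable fun s => ∑ k, u x s i k * L s ξ k j :=
  Finset.measurable_sum _ fun k _ =>
    ((hu i k).comp measurable_prodMk_left).mul ((hL k j).comp measurable_prodMk_right)

theorem abs_volterra_integrand_le (hu : BoundedOnTriangle u A) (hL : BoundedOnTriangle L B)
    {x ξ s : ℝ} (h : (x, ξ) ∈ triangle) (hs : s ∈ Icc ξ x) (i : ι) (j : ρ) :
    |∑ k, u x s i k * L s ξ k j| ≤ Fintype.card κ * (A * B) :=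
  abs_sum_mul_le (fun k => hu x s (mem_triangle_left h hs) i k)
    (fun k => hL s ξ (mem_triangle_right h hs) k j)

theorem intervalIntegrable_volterra_integrand (hu_meas : KernelMeasurable u)
    (hL_meas : KernelMeasurable L) (hu : BoundedOnTriangle u A) (hL : BoundedOnTriangle L B)
    {x ξ : ℝ} (h : (x, ξ) ∈ triangle) (i : ι) (j : ρ) :
    IntervalIntegrable (fun s => ∑ k, u x s i k * L s ξ k j) volume ξ x := by
  refine (intervalIntegrable_const (c := Fintype.card κ * (A * B))).mono_fun'
    (hu_meas.measurable_volterra_integrand hL_meas x ξ i j).aestronglyMeasurable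
    ((ae_restrict_iff' measurableSet_uIoc).mpr (.of_forall fun s hs => ?_))
  rw [uIoc_of_le h.2.1] at hs
  exact abs_volterra_integrand_le hu hL h (Ioc_subset_Icc_self hs) i j

theorem volterra_sub_apply {x ξ : ℝ} {i : ι} {j : ρ}
    (hu : IntervalIntegrable (fun s => ∑ k, u x s i k * L s ξ k j) volume ξ x)
    (hv : IntervalIntegrable (fun s => ∑ k, v x s i k * L s ξ k j) volume ξ x) :
    volterra L (u - v) x ξ i j = volterra L u x ξ i j - volterra L v x ξ i j := by
  simp only [volterra, Pi.sub_apply, sub_mul, Finset.sum_sub_distrib]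
  exact intervalIntegral.integral_sub hu hv

theorem abs_volterra_le_of_le_pow (N : ℕ) (hL : BoundedOnTriangle L B)
    (hu : ∀ x ξ, (x, ξ) ∈ triangle → ∀ i k, |u x ξ i k| ≤ A * ((x - ξ) ^ N / N !))
    {x ξ : ℝ} (h : (x, ξ) ∈ triangle) (i : ι) (j : ρ) :
    |volterra L u x ξ i j| ≤ Fintype.card κ * B * A * ((x - ξ) ^ (N + 1) / (N + 1)!) := by
  have hξx : ξ ≤ x := h.2.1
  have hbound : ∀ s ∈ Ioc ξ x, ‖∑ k, u x s i k * L s ξ k j‖ ≤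
      Fintype.card κ * B * A * ((x - s) ^ N / N !) := fun s hs => by
    have hs' := Ioc_subset_Icc_self hs
    rw [Real.norm_eq_abs]
    convert abs_sum_mul_le (fun k => hu x s (mem_triangle_left h hs') i k)
      (fun k => hL s ξ (mem_triangle_right h hs') k j) using 1
    ring
  calc |volterra L u x ξ i j|
      ≤ ∫ s in ξ..x, Fintype.card κ * B * A * ((x - s) ^ N / N !) :=
        intervalIntegral.norm_integral_le_of_norm_le hξx (.of_forall hbound)
          (by apply Continuous.intervalIntegrable; fun_prop)
    _ = Fintype.card κ * B * A * ((x - ξ) ^ (N + 1) / (N + 1)!) := by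
        rw [intervalIntegral.integral_const_mul, integral_sub_pow_div_factorial]

theorem abs_volterra_le (hB : 0 ≤ B) (hA : 0 ≤ A) (hL : BoundedOnTriangle L B)
    (hu : BoundedOnTriangle u A) {x ξ : ℝ} (h : (x, ξ) ∈ triangle) (i : ι) (j : ρ) :
    |volterra L u x ξ i j| ≤ Fintype.card κ * B * A := by
  have hu₀ : ∀ x ξ, (x, ξ) ∈ triangle → ∀ i k, |u x ξ i k| ≤ A * ((x - ξ) ^ 0 / 0 !) :=
    fun x ξ h i k => by simpa using hu x ξ h i k
  calc |volterra L u x ξ i j| ≤ Fintype.card κ * B * A * (x - ξ) := by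
        simpa using abs_volterra_le_of_le_pow 0 hL hu₀ h i j
    _ ≤ Fintype.card κ * B * A * 1 := by gcongr; exact sub_le_one_of_mem_triangle h
    _ = Fintype.card κ * B * A := mul_one _

end Volterra

section Resolvent

variable {ι κ : Type*} [Fintype κ] {L : ℝ → ℝ → κ → κ → ℝ} {A B : ℝ}

theorem abs_le_of_eq_volterra_iterate {u : ℕ → ℝ → ℝ → ι → κ → ℝ} (hL : BoundedOnTriangle L B)
    (h₀ : BoundedOnTriangle (u 0) A)
    (hsucc : ∀ N x ξ, (x, ξ) ∈ triangle → ∀ i j, u (N + 1) x ξ i j = volterra L (u N) x ξ i j)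
    (N : ℕ) {x ξ : ℝ} (h : (x, ξ) ∈ triangle) (i : ι) (j : κ) :
    |u N x ξ i j| ≤ A * (Fintype.card κ * B) ^ N * ((x - ξ) ^ N / N !) := by
  induction N generalizing x ξ i j with
  | zero => simpa using h₀ x ξ h i j
  | succ N ih =>
    rw [hsucc N x ξ h i j]
    convert abs_volterra_le_of_le_pow N hL (fun x ξ h i k => ih h i k) h i j using 1
    ring

theorem eq_zero_of_eq_volterra {d : ℝ → ℝ → ι → κ → ℝ} {D : ℝ} (hL : BoundedOnTriangle L B)
    (hd : BoundedOnTriangle d D)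
    (heq : ∀ x ξ, (x, ξ) ∈ triangle → ∀ i j, d x ξ i j = volterra L d x ξ i j)
    {x ξ : ℝ} (h : (x, ξ) ∈ triangle) (i : ι) (j : κ) : d x ξ i j = 0 := by
  have hle : ∀ N : ℕ, |d x ξ i j| ≤ D * ((Fintype.card κ * B * (x - ξ)) ^ N / N !) := fun N => by
    convert abs_le_of_eq_volterra_iterate (u := fun _ => d) hL hd (fun _ => heq) N h i j using 1
    rw [mul_pow]
    ring
  have hlim : Tendsto (fun N : ℕ => D * ((Fintype.card κ * B * (x - ξ)) ^ N / N !)) atTop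
      (nhds 0) := by
    simpa using (FloorSemiring.tendsto_pow_div_factorial_atTop _).const_mul D
  exact abs_nonpos_iff.mp (ge_of_tendsto' hlim hle)

noncomputable def neumannTerm (f : ℝ → ℝ → ι → κ → ℝ) (L : ℝ → ℝ → κ → κ → ℝ) :
    ℕ → ℝ → ℝ → ι → κ → ℝ
  | 0 => f
  | N + 1 => volterra L (neumannTerm f L N)

-- Off the triangle the series need not converge, and `tsum` is then `0` there.
noncomputable def neumannSeries (f : ℝ → ℝ → ι → κ → ℝ) (L : ℝ → ℝ → κ → κ → ℝ) :
    ℝ → ℝ → ι → κ → ℝ :=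
  fun x ξ i j => ∑' N, neumannTerm f L N x ξ i j

variable {f : ℝ → ℝ → ι → κ → ℝ}

theorem KernelMeasurable.neumannTerm (hf : KernelMeasurable f) (hL : KernelMeasurable L)
    (N : ℕ) : KernelMeasurable (neumannTerm f L N) := by
  induction N with
  | zero => exact hf
  | succ N ih => exact ih.volterra hL

theorem KernelMeasurable.neumannSeries (hf : KernelMeasurable f) (hL : KernelMeasurable L) :
    KernelMeasurable (neumannSeries f L) :=
  fun i j => Measurable.tsum fun N => hf.neumannTerm hL N i j

theorem hasSum_mul_pow_div_factorial (A c : ℝ) :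
    HasSum (fun N : ℕ => A * (c ^ N / N !)) (A * Real.exp c) := by
  rw [Real.exp_eq_exp_ℝ]
  exact (NormedSpace.expSeries_div_hasSum_exp c).mul_left A

theorem abs_neumannTerm_le (hB : 0 ≤ B) (hA : 0 ≤ A) (hL : BoundedOnTriangle L B)
    (hf : BoundedOnTriangle f A) (N : ℕ) :
    BoundedOnTriangle (neumannTerm f L N) (A * ((Fintype.card κ * B) ^ N / N !)) := by
  intro x ξ h i j
  have hxξ : 0 ≤ x - ξ := sub_nonneg.mpr h.2.1
  calc |neumannTerm f L N x ξ i j|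
      ≤ A * (Fintype.card κ * B) ^ N * ((x - ξ) ^ N / N !) :=
        abs_le_of_eq_volterra_iterate hL hf (fun _ _ _ _ _ _ => rfl) N h i j
    _ ≤ A * (Fintype.card κ * B) ^ N * (1 ^ N / N !) := by
        gcongr
        exact sub_le_one_of_mem_triangle h
    _ = A * ((Fintype.card κ * B) ^ N / N !) := by ring

theorem hasSum_neumannTerm (hB : 0 ≤ B) (hA : 0 ≤ A) (hL : BoundedOnTriangle L B)
    (hf : BoundedOnTriangle f A) {x ξ : ℝ} (h : (x, ξ) ∈ triangle) (i : ι) (j : κ) :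
    HasSum (fun N => neumannTerm f L N x ξ i j) (neumannSeries f L x ξ i j) :=
  ((hasSum_mul_pow_div_factorial A _).summable.of_norm_bounded
    fun N => abs_neumannTerm_le hB hA hL hf N _ _ h i j).hasSum

theorem abs_neumannSeries_le (hB : 0 ≤ B) (hA : 0 ≤ A) (hL : BoundedOnTriangle L B)
    (hf : BoundedOnTriangle f A) :
    BoundedOnTriangle (neumannSeries f L) (A * Real.exp (Fintype.card κ * B)) :=
  fun _ _ h i j => tsum_of_norm_bounded (f := fun N => neumannTerm f L N _ _ i j)
    (hasSum_mul_pow_div_factorial A _) fun N => abs_neumannTerm_le hB hA hL hf N _ _ h i j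

def IsVolterraSolution (f : ℝ → ℝ → ι → κ → ℝ) (L : ℝ → ℝ → κ → κ → ℝ)
    (u : ℝ → ℝ → ι → κ → ℝ) : Prop :=
  ∀ x ξ, (x, ξ) ∈ triangle → ∀ i j, u x ξ i j = f x ξ i j + volterra L u x ξ i j

theorem isVolterraSolution_neumannSeries (hB : 0 ≤ B) (hA : 0 ≤ A)
    (hf_meas : KernelMeasurable f) (hL_meas : KernelMeasurable L) (hL : BoundedOnTriangle L B)
    (hf : BoundedOnTriangle f A) : IsVolterraSolution f L (neumannSeries f L) := by
  intro x ξ h i j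
  have hvolterra : HasSum (fun N => volterra L (neumannTerm f L N) x ξ i j)
      (volterra L (neumannSeries f L) x ξ i j) := by
    refine intervalIntegral.hasSum_integral_of_dominated_convergence
      (fun N _ => Fintype.card κ * (A * ((Fintype.card κ * B) ^ N / N !) * B))
      (fun N => ((hf_meas.neumannTerm hL_meas N).measurable_volterra_integrand hL_meas
        x ξ i j).aestronglyMeasurable) (fun N => .of_forall fun s hs => ?_)
      (.of_forall fun _ _ => ((hasSum_mul_pow_div_factorial A _).mul_right B).summable.mul_left _)
      intervalIntegrable_const (.of_forall fun s hs => ?_)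
    all_goals
      rw [uIoc_of_le h.2.1] at hs
      have hs' := Ioc_subset_Icc_self hs
    · exact abs_volterra_integrand_le (abs_neumannTerm_le hB hA hL hf N) hL h hs' i j
    · exact hasSum_sum fun k _ =>
        (hasSum_neumannTerm hB hA hL hf (mem_triangle_left h hs') i k).mul_right _
  rw [neumannSeries, (hasSum_neumannTerm hB hA hL hf h i j).summable.tsum_eq_zero_add]
  exact congrArg (f x ξ i j + ·) hvolterra.tsum_eq

theorem IsVolterraSolution.eq {u v : ℝ → ℝ → ι → κ → ℝ} {A' : ℝ}
    (hu_eq : IsVolterraSolution f L u) (hv_eq : IsVolterraSolution f L v)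
    (hu_meas : KernelMeasurable u) (hv_meas : KernelMeasurable v) (hL_meas : KernelMeasurable L)
    (hu : BoundedOnTriangle u A) (hv : BoundedOnTriangle v A') (hL : BoundedOnTriangle L B)
    {x ξ : ℝ} (h : (x, ξ) ∈ triangle) (i : ι) (j : κ) : u x ξ i j = v x ξ i j := by
  have hdiff : BoundedOnTriangle (u - v) (A + A') := fun x ξ h i j =>
    (abs_sub _ _).trans (add_le_add (hu x ξ h i j) (hv x ξ h i j))
  refine sub_eq_zero.mp (eq_zero_of_eq_volterra hL hdiff (fun x ξ h i j => ?_) h i j)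
  rw [volterra_sub_apply (intervalIntegrable_volterra_integrand hu_meas hL_meas hu hL h i j)
    (intervalIntegrable_volterra_integrand hv_meas hL_meas hv hL h i j)]
  simp only [Pi.sub_apply]
  rw [hu_eq x ξ h i j, hv_eq x ξ h i j]
  ring

end Resolvent

theorem volterra_coupling_coefficients_general
    (n m : ℕ)
    (Spm : Fin n → Fin m → ℝ)
    (K : ℝ → ℝ → Fin m → Fin n → ℝ) (L : ℝ → ℝ → Fin m → Fin m → ℝ)
    (hLmeas : ∀ i j, Measurable (fun p : ℝ × ℝ => L p.1 p.2 i j))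
    (hKLbdd : ∃ B : ℝ, ∀ x ξ : ℝ, 0 ≤ ξ → ξ ≤ x → x ≤ 1 →
        (∀ i j, |K x ξ i j| ≤ B) ∧ (∀ i j, |L x ξ i j| ≤ B)) :
    ∃ Cm : ℝ → ℝ → Fin n → Fin m → ℝ,
      ((∀ i j, Measurable (fun p : ℝ × ℝ => Cm p.1 p.2 i j)) ∧
       (∃ B : ℝ, ∀ x ξ : ℝ, 0 ≤ ξ → ξ ≤ x → x ≤ 1 → ∀ i j, |Cm x ξ i j| ≤ B) ∧
       (∀ x ξ : ℝ, 0 ≤ ξ → ξ ≤ x → x ≤ 1 → ∀ (i : Fin n) (j : Fin m),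
          Cm x ξ i j = (∑ k, Spm i k * L x ξ k j) +
            ∫ s in ξ..x, ∑ k, Cm x s i k * L s ξ k j)) ∧
      (∀ Cm' : ℝ → ℝ → Fin n → Fin m → ℝ,
        (∀ i j, Measurable (fun p : ℝ × ℝ => Cm' p.1 p.2 i j)) →
        (∃ B : ℝ, ∀ x ξ : ℝ, 0 ≤ ξ → ξ ≤ x → x ≤ 1 → ∀ i j, |Cm' x ξ i j| ≤ B) →
        (∀ x ξ : ℝ, 0 ≤ ξ → ξ ≤ x → x ≤ 1 → ∀ (i : Fin n) (j : Fin m),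
          Cm' x ξ i j = (∑ k, Spm i k * L x ξ k j) +
            ∫ s in ξ..x, ∑ k, Cm' x s i k * L s ξ k j) →
        ∀ x ξ : ℝ, 0 ≤ ξ → ξ ≤ x → x ≤ 1 → ∀ i j, Cm' x ξ i j = Cm x ξ i j) ∧
      (∀ Cp : ℝ → ℝ → Fin n → Fin n → ℝ,
        (∀ x ξ : ℝ, 0 ≤ ξ → ξ ≤ x → x ≤ 1 → ∀ (i : Fin n) (j : Fin n),
          Cp x ξ i j = (∑ k, Spm i k * K x ξ k j) +
            ∫ s in ξ..x, ∑ k, Cm x s i k * K s ξ k j) →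
        ∃ B : ℝ, ∀ x ξ : ℝ, 0 ≤ ξ → ξ ≤ x → x ≤ 1 → ∀ i j, |Cp x ξ i j| ≤ B) := by
  obtain ⟨B, hB, hK, hL⟩ : ∃ B, 0 ≤ B ∧ BoundedOnTriangle K B ∧ BoundedOnTriangle L B := by
    obtain ⟨B₀, hB₀⟩ := hKLbdd
    exact ⟨max B₀ 0, le_max_right _ _,
      fun x ξ h i j => ((hB₀ x ξ h.1 h.2.1 h.2.2).1 i j).trans (le_max_left _ _),
      fun x ξ h i j => ((hB₀ x ξ h.1 h.2.1 h.2.2).2 i j).trans (le_max_left _ _)⟩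
  have hSpm : ∀ i k, |Spm i k| ≤ ‖Spm‖ := fun i k =>
    (norm_le_pi_norm (Spm i) k).trans (norm_le_pi_norm Spm i)
  set f : ℝ → ℝ → Fin n → Fin m → ℝ := fun x ξ i j => ∑ k, Spm i k * L x ξ k j
  have hf_meas : KernelMeasurable f := fun i j =>
    Finset.measurable_sum _ fun k _ => (hLmeas k j).const_mul _
  have hf : BoundedOnTriangle f (Fintype.card (Fin m) * (‖Spm‖ * B)) := fun x ξ h i j =>
    abs_sum_mul_le (hSpm i) (fun k => hL x ξ h k j)
  have hf_nonneg : 0 ≤ (Fintype.card (Fin m) : ℝ) * (‖Spm‖ * B) := by positivity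
  obtain ⟨A, hA, hC⟩ : ∃ A, 0 ≤ A ∧ BoundedOnTriangle (neumannSeries f L) A :=
    ⟨_, by positivity, abs_neumannSeries_le hB hf_nonneg hL hf⟩
  have hC_eq := isVolterraSolution_neumannSeries hB hf_nonneg hf_meas hLmeas hL hf
  refine ⟨neumannSeries f L, ⟨hf_meas.neumannSeries hLmeas,
    ⟨A, fun x ξ h₁ h₂ h₃ => hC x ξ ⟨h₁, h₂, h₃⟩⟩, fun x ξ h₁ h₂ h₃ => hC_eq x ξ ⟨h₁, h₂, h₃⟩⟩, ?_, ?_⟩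
  · rintro C hC_meas ⟨B', hB'⟩ hC_eq' x ξ h₁ h₂ h₃
    exact IsVolterraSolution.eq (fun x ξ h => hC_eq' x ξ h.1 h.2.1 h.2.2) hC_eq hC_meas
      (hf_meas.neumannSeries hLmeas) hLmeas (fun x ξ h => hB' x ξ h.1 h.2.1 h.2.2) hC hL
      ⟨h₁, h₂, h₃⟩
  · intro Cp hCp
    refine ⟨Fintype.card (Fin m) * (‖Spm‖ * B) + Fintype.card (Fin m) * B * A,
      fun x ξ h₁ h₂ h₃ i j => ?_⟩
    rw [hCp x ξ h₁ h₂ h₃ i j]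
    exact (abs_add_le _ _).trans (add_le_add
      (abs_sum_mul_le (hSpm i) (fun k => hK x ξ ⟨h₁, h₂, h₃⟩ k j))
      (abs_volterra_le hB hA hK hC ⟨h₁, h₂, h₃⟩ i j))

theorem volterra_coupling_coefficients
    (n m : ℕ)
    (Spm : Fin n → Fin m → ℝ)
    (K : ℝ → ℝ → Fin m → Fin n → ℝ) (L : ℝ → ℝ → Fin m → Fin m → ℝ)
    (hKmeas : ∀ i j, Measurable (fun p : ℝ × ℝ => K p.1 p.2 i j))
    (hLmeas : ∀ i j, Measurable (fun p : ℝ × ℝ => L p.1 p.2 i j))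
    (hKLbdd : ∃ B : ℝ, ∀ x ξ : ℝ, 0 ≤ ξ → ξ ≤ x → x ≤ 1 →
        (∀ i j, |K x ξ i j| ≤ B) ∧ (∀ i j, |L x ξ i j| ≤ B)) :
    ∃ Cm : ℝ → ℝ → Fin n → Fin m → ℝ,
      ((∀ i j, Measurable (fun p : ℝ × ℝ => Cm p.1 p.2 i j)) ∧
       (∃ B : ℝ, ∀ x ξ : ℝ, 0 ≤ ξ → ξ ≤ x → x ≤ 1 → ∀ i j, |Cm x ξ i j| ≤ B) ∧
       (∀ x ξ : ℝ, 0 ≤ ξ → ξ ≤ x → x ≤ 1 → ∀ (i : Fin n) (j : Fin m),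
          Cm x ξ i j = (∑ k, Spm i k * L x ξ k j) +
            ∫ s in ξ..x, ∑ k, Cm x s i k * L s ξ k j)) ∧
      (∀ Cm' : ℝ → ℝ → Fin n → Fin m → ℝ,
        (∀ i j, Measurable (fun p : ℝ × ℝ => Cm' p.1 p.2 i j)) →
        (∃ B : ℝ, ∀ x ξ : ℝ, 0 ≤ ξ → ξ ≤ x → x ≤ 1 → ∀ i j, |Cm' x ξ i j| ≤ B) →
        (∀ x ξ : ℝ, 0 ≤ ξ → ξ ≤ x → x ≤ 1 → ∀ (i : Fin n) (j : Fin m),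
          Cm' x ξ i j = (∑ k, Spm i k * L x ξ k j) +
            ∫ s in ξ..x, ∑ k, Cm' x s i k * L s ξ k j) →
        ∀ x ξ : ℝ, 0 ≤ ξ → ξ ≤ x → x ≤ 1 → ∀ i j, Cm' x ξ i j = Cm x ξ i j) ∧
      (∀ Cp : ℝ → ℝ → Fin n → Fin n → ℝ,
        (∀ x ξ : ℝ, 0 ≤ ξ → ξ ≤ x → x ≤ 1 → ∀ (i : Fin n) (j : Fin n),
          Cp x ξ i j = (∑ k, Spm i k * K x ξ k j) +
            ∫ s in ξ..x, ∑ k, Cm x s i k * K s ξ k j) →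
        ∃ B : ℝ, ∀ x ξ : ℝ, 0 ≤ ξ → ξ ≤ x → x ≤ 1 → ∀ i j, |Cp x ξ i j| ≤ B) :=
  volterra_coupling_coefficients_general n m Spm K L hLmeas hKLbdd
end
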